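/- arXiv:1907.01523 — 5 statements merged into one kernel-verified Lean document; each statement's English description precedes it below -/
import Mathlib

section
/- Let a, W, r > 0 and A, B ≥ 0. Define R : ℝ → ℝ by R(P) = ∫_{g ∈ (0,∞)} e^{-g} · W · log(1 + a·g·P) dg, and for x ∈ [0, 1] define P_req(x) = sInf { p : ℝ | p ≥ 0 ∧ R(p) ≥ x·r }. Assume that for every x ∈ [0, 1] there exists p ≥ 0 with R(p) ≥ x·r. Then the function η(x) = A·(1 - x)^3 + B·P_req(x) is convex on the interval [0, 1]. -/
/-!
The ergodic rate `R(P) = ∫ e^{-g} W log (1 + a g P) dg` is an average of functions concave in `P`,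
hence concave on `P ≥ 0`. Consequently, if `p` serves the demand `x r` and `q` serves `y r`, then
`s p + t q` serves `(s x + t y) r`; so the minimal power `P_req`, an infimum over these feasible
powers, is convex. Adding the convex term `A (1 - x)^3` preserves convexity.
-/

open MeasureTheory Real Set
open scoped Pointwise

theorem convexOn_one_sub_pow {𝕜 : Type*} [Field 𝕜] [LinearOrder 𝕜] [IsStrictOrderedRing 𝕜]
    (n : ℕ) : ConvexOn 𝕜 (Iic 1) fun x : 𝕜 => (1 - x) ^ n := by
  refine ⟨convex_Iic 1, fun x hx y hy s t hs ht hst => ?_⟩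
  have key := (convexOn_pow n).2 (sub_nonneg.2 hx) (sub_nonneg.2 hy) hs ht hst
  simp only [smul_eq_mul] at key ⊢
  convert key using 2
  linear_combination -hst

theorem concaveOn_log_one_add_mul {c : ℝ} (hc : 0 ≤ c) :
    ConcaveOn ℝ (Ici 0) fun p => log (1 + c * p) := by
  refine ⟨convex_Ici 0, fun p hp q hq s t hs ht hst => ?_⟩
  have hp' : 0 < 1 + c * p := by simp only [mem_Ici] at hp; positivity
  have hq' : 0 < 1 + c * q := by simp only [mem_Ici] at hq; positivity
  have key := strictConcaveOn_log_Ioi.concaveOn.2 hp' hq' hs ht hst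
  simp only [smul_eq_mul] at key ⊢
  convert key using 2
  linear_combination -hst

theorem ConcaveOn.integral {α E : Type*} [MeasurableSpace α] {μ : Measure α}
    [AddCommGroup E] [Module ℝ E] {K : Set E} {f : α → E → ℝ} (hK : Convex ℝ K)
    (hf : ∀ᵐ g ∂μ, ConcaveOn ℝ K (f g)) (hint : ∀ p ∈ K, Integrable (f · p) μ) :
    ConcaveOn ℝ K fun p => ∫ g, f g p ∂μ := by
  refine ⟨hK, fun p hp q hq s t hs ht hst => ?_⟩
  simp only [smul_eq_mul]
  rw [← integral_const_mul, ← integral_const_mul,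
    ← integral_add ((hint p hp).const_mul s) ((hint q hq).const_mul t)]
  refine integral_mono_ae (((hint p hp).const_mul s).add ((hint q hq).const_mul t))
    (hint _ (hK hp hq hs ht hst)) ?_
  filter_upwards [hf] with g hg
  simpa only [smul_eq_mul] using hg.2 hp hq hs ht hst

theorem convexOn_sInf_of_concaveOn {K D : Set ℝ} {R d : ℝ → ℝ} (hR : ConcaveOn ℝ K R)
    (hd : ConvexOn ℝ D d) (hK : BddBelow K) (hfeas : ∀ x ∈ D, ∃ p ∈ K, d x ≤ R p) :
    ConvexOn ℝ D fun x => sInf {p | p ∈ K ∧ d x ≤ R p} := by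
  set S : ℝ → Set ℝ := fun x => {p | p ∈ K ∧ d x ≤ R p}
  have hbdd (x : ℝ) : BddBelow (S x) := hK.mono fun _ hp => hp.1
  have hne (x : ℝ) (hx : x ∈ D) : (S x).Nonempty := hfeas x hx
  refine ⟨hd.1, fun x hx y hy s t hs ht hst => ?_⟩
  have hcombo : s • S x + t • S y ⊆ S (s • x + t • y) := by
    rintro _ ⟨_, ⟨p, hp, rfl⟩, _, ⟨q, hq, rfl⟩, rfl⟩
    refine ⟨hR.1 hp.1 hq.1 hs ht hst, ?_⟩
    calc d (s • x + t • y) ≤ s • d x + t • d y := hd.2 hx hy hs ht hst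
      _ ≤ s • R p + t • R q := by
        simp only [smul_eq_mul]
        gcongr
        exacts [hp.2, hq.2]
      _ ≤ R (s • p + t • q) := hR.2 hp.1 hq.1 hs ht hst
  calc sInf (S (s • x + t • y)) ≤ sInf (s • S x + t • S y) :=
        csInf_le_csInf (hbdd _) (((hne x hx).smul_set).add (hne y hy).smul_set) hcombo
    _ = s • sInf (S x) + t • sInf (S y) := by
        rw [csInf_add (hne x hx).smul_set ((hbdd x).smul_of_nonneg hs) (hne y hy).smul_set
          ((hbdd y).smul_of_nonneg ht), Real.sInf_smul_of_nonneg hs, Real.sInf_smul_of_nonneg ht]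

/-- Ergodic capacity `E_g[W log (1 + a g P)]` under Rayleigh fading, where the gain `g` is `Exp(1)`. -/
noncomputable def ergodicCapacity (a W P : ℝ) : ℝ :=
  ∫ g in Ioi 0, exp (-g) * W * log (1 + a * g * P)

theorem integrableOn_ergodicCapacity_integrand (W : ℝ) {a P : ℝ} (ha : 0 ≤ a) (hP : 0 ≤ P) :
    IntegrableOn (fun g => exp (-g) * W * log (1 + a * g * P)) (Ioi 0) := by
  have hmeas : Measurable fun g : ℝ => exp (-g) * W * log (1 + a * g * P) := by fun_prop
  have hGamma : IntegrableOn (fun g : ℝ => exp (-g) * g) (Ioi 0) := by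
    simpa [show (2 : ℝ) - 1 = 1 by norm_num] using GammaIntegral_convergent two_pos
  refine Integrable.mono' (hGamma.const_mul (|W| * a * P)) hmeas.aestronglyMeasurable ?_
  rw [ae_restrict_iff' measurableSet_Ioi]
  filter_upwards with g (hg : 0 < g)
  have hlog_nonneg : 0 ≤ log (1 + a * g * P) := log_nonneg (by nlinarith [mul_nonneg ha hg.le])
  have hlog_le : log (1 + a * g * P) ≤ a * g * P := by
    linarith [log_le_sub_one_of_pos (by positivity : 0 < 1 + a * g * P)]
  rw [norm_eq_abs, abs_mul, abs_mul, abs_of_nonneg hlog_nonneg, abs_of_pos (exp_pos _)]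
  calc exp (-g) * |W| * log (1 + a * g * P) ≤ exp (-g) * |W| * (a * g * P) := by gcongr
    _ = |W| * a * P * (exp (-g) * g) := by ring

theorem concaveOn_ergodicCapacity {a W : ℝ} (ha : 0 ≤ a) (hW : 0 ≤ W) :
    ConcaveOn ℝ (Ici 0) (ergodicCapacity a W) := by
  refine ConcaveOn.integral (convex_Ici 0) ?_
    fun P hP => integrableOn_ergodicCapacity_integrand W ha hP
  rw [ae_restrict_iff' measurableSet_Ioi]
  filter_upwards with g (hg : 0 < g)
  exact (concaveOn_log_one_add_mul (mul_nonneg ha hg.le)).smul (by positivity)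

theorem normalized_energy_convex_general (a W r A B : ℝ)
    (ha : 0 < a) (hW : 0 < W) (hA : 0 ≤ A) (hB : 0 ≤ B)
    (R : ℝ → ℝ)
    (hR : ∀ P : ℝ, R P = ∫ g in Set.Ioi (0:ℝ), Real.exp (-g) * W * Real.log (1 + a * g * P))
    (P_req : ℝ → ℝ)
    (hP_req : ∀ x : ℝ, P_req x = sInf {p : ℝ | 0 ≤ p ∧ x * r ≤ R p})
    (hfeas : ∀ x ∈ Set.Icc (0:ℝ) 1, ∃ p : ℝ, 0 ≤ p ∧ x * r ≤ R p) :
    ConvexOn ℝ (Set.Icc (0:ℝ) 1)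
      (fun x : ℝ => A * (1 - x) ^ 3 + B * P_req x) := by
  have hR_concave : ConcaveOn ℝ (Ici 0) R := by
    rw [show R = ergodicCapacity a W from funext hR]
    exact concaveOn_ergodicCapacity ha.le hW.le
  have hP_convex : ConvexOn ℝ (Icc 0 1) P_req := by
    simp only [funext hP_req]
    exact convexOn_sInf_of_concaveOn (d := fun x => x * r) hR_concave
      ((LinearMap.mulRight ℝ r).convexOn (convex_Icc 0 1)) ⟨0, fun _ hp => hp⟩ hfeas
  have hcube_convex : ConvexOn ℝ (Icc 0 1) fun x : ℝ => (1 - x) ^ 3 :=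
    (convexOn_one_sub_pow 3).subset Icc_subset_Iic_self (convex_Icc 0 1)
  exact (hcube_convex.smul hA).add (hP_convex.smul hB)

theorem normalized_energy_convex (a W r A B : ℝ)
    (ha : 0 < a) (hW : 0 < W) (hr : 0 < r) (hA : 0 ≤ A) (hB : 0 ≤ B)
    (R : ℝ → ℝ)
    (hR : ∀ P : ℝ, R P = ∫ g in Set.Ioi (0:ℝ), Real.exp (-g) * W * Real.log (1 + a * g * P))
    (P_req : ℝ → ℝ)
    (hP_req : ∀ x : ℝ, P_req x = sInf {p : ℝ | 0 ≤ p ∧ x * r ≤ R p})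
    (hfeas : ∀ x ∈ Set.Icc (0:ℝ) 1, ∃ p : ℝ, 0 ≤ p ∧ x * r ≤ R p) :
    ConvexOn ℝ (Set.Icc (0:ℝ) 1)
      (fun x : ℝ => A * (1 - x) ^ 3 + B * P_req x) :=
  normalized_energy_convex_general a W r A B ha hW hA hB R hR P_req hP_req hfeas
end

section
/- Let a > 0 and P > 0. The function N ↦ ∫_{g ∈ (0,∞)} e^{-g} · N · log(1 + a·g·P/N) dg (Lebesgue integral over the interval (0,∞)) is strictly monotonically increasing on (0, ∞). -/
/-!
For fixed `t > 0` the map `N ↦ N log (1 + t / N)` is strictly increasing: it is the perspective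
of the strictly concave function `log (1 + ·)`, which vanishes at `0`. Multiplying by `e^{-g}` with
`t = a g P` gives a pointwise strict inequality between the integrands, which are dominated by
`a P g e^{-g}`, hence integrable; integrating over `(0, ∞)` keeps the inequality strict.
-/

open MeasureTheory Real Set

theorem StrictConcaveOn.strictMonoOn_mul_apply_div {f : ℝ → ℝ} (hf : StrictConcaveOn ℝ (Ici 0) f)
    (hf₀ : 0 ≤ f 0) {t : ℝ} (ht : 0 < t) :
    StrictMonoOn (fun x => x * f (t / x)) (Ioi 0) := by
  intro x (hx : 0 < x) y (hy : 0 < y) hxy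
  have hyx : 0 < y - x := sub_pos.2 hxy
  -- `t / y` is the convex combination of `t / x` and `0` with weights `x / y` and `1 - x / y`
  have hcomb : (x / y) • (t / x) + ((y - x) / y) • (0 : ℝ) = t / y := by
    simp only [smul_eq_mul, mul_zero, add_zero]; field_simp
  have hlt := hf.2 (mem_Ici.2 (div_pos ht hx).le) (mem_Ici.2 le_rfl) (div_pos ht hx).ne'
    (div_pos hx hy) (div_pos hyx hy) (by field_simp; ring)
  rw [hcomb, smul_eq_mul, smul_eq_mul] at hlt
  calc x * f (t / x) ≤ x * f (t / x) + (y - x) * f 0 := le_add_of_nonneg_right (by positivity)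
    _ = y * (x / y * f (t / x) + (y - x) / y * f 0) := by field_simp
    _ < y * f (t / y) := mul_lt_mul_of_pos_left hlt hy

theorem strictConcaveOn_log_one_add : StrictConcaveOn ℝ (Ici 0) fun x => log (1 + x) :=
  (strictConcaveOn_log_Ioi.translate_right 1).subset
    (fun x (hx : 0 ≤ x) => show 0 < 1 + x by linarith) (convex_Ici 0)

theorem integrableOn_exp_neg_mul_log_one_add_mul {c : ℝ} (hc : 0 ≤ c) :
    IntegrableOn (fun x => exp (-x) * log (1 + c * x)) (Ioi 0) := by
  have hgamma : IntegrableOn (fun x => exp (-x) * x) (Ioi 0) := by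
    simpa [show (2 : ℝ) - 1 = 1 by norm_num] using GammaIntegral_convergent (s := 2) two_pos
  have hdom : IntegrableOn (fun x => c * (exp (-x) * x)) (Ioi 0) := hgamma.const_mul c
  refine hdom.mono' (by fun_prop) ((ae_restrict_iff' measurableSet_Ioi).2 (ae_of_all _ ?_))
  intro x (hx : 0 < x)
  have hlog_nonneg : 0 ≤ log (1 + c * x) := log_nonneg (by nlinarith)
  have hlog_le : log (1 + c * x) ≤ c * x := by
    linarith [log_le_sub_one_of_pos (show 0 < 1 + c * x by nlinarith)]
  rw [norm_of_nonneg (by positivity)]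
  calc exp (-x) * log (1 + c * x) ≤ exp (-x) * (c * x) := by gcongr
    _ = c * (exp (-x) * x) := by ring

theorem setIntegral_lt_setIntegral_of_forall_lt {X : Type*} [MeasurableSpace X] {μ : Measure X}
    {s : Set X} {f g : X → ℝ} (hs : MeasurableSet s) (hμs : μ s ≠ 0)
    (hf : IntegrableOn f s μ) (hg : IntegrableOn g s μ) (hfg : ∀ x ∈ s, f x < g x) :
    ∫ x in s, f x ∂μ < ∫ x in s, g x ∂μ := by
  rw [← sub_pos, ← integral_sub hg hf]
  have hsupp : s ⊆ Function.support (g - f) ∩ s :=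
    fun x hx => ⟨(sub_pos.2 (hfg x hx)).ne', hx⟩
  refine (setIntegral_pos_iff_support_of_nonneg_ae ?_ (hg.sub hf)).2
    ((pos_iff_ne_zero.2 hμs).trans_le (measure_mono hsupp))
  filter_upwards [ae_restrict_mem hs] with x hx
  exact (sub_pos.2 (hfg x hx)).le

theorem ergodic_capacity_strictMono_in_bandwidth (a P : ℝ) (ha : 0 < a) (hP : 0 < P) :
    StrictMonoOn
      (fun N : ℝ => ∫ g in Set.Ioi (0:ℝ), Real.exp (-g) * N * Real.log (1 + a * g * P / N))
      (Set.Ioi (0:ℝ)) := by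
  have hint : ∀ N ∈ Ioi (0 : ℝ),
      IntegrableOn (fun g => exp (-g) * N * log (1 + a * g * P / N)) (Ioi 0) := by
    intro N (hN : 0 < N)
    have hc : 0 ≤ a * P / N := by positivity
    refine IntegrableOn.congr_fun ((integrableOn_exp_neg_mul_log_one_add_mul hc).const_mul N)
      (fun g _ => ?_) measurableSet_Ioi
    rw [show a * P / N * g = a * g * P / N by ring]
    ring
  intro M hM N hN hMN
  refine setIntegral_lt_setIntegral_of_forall_lt measurableSet_Ioi (by simp) (hint M hM)
    (hint N hN) fun g (hg : 0 < g) => ?_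
  have hcap := strictConcaveOn_log_one_add.strictMonoOn_mul_apply_div (by simp)
    (by positivity : 0 < a * g * P) hM hN hMN
  simp only [mul_assoc] at hcap ⊢
  exact mul_lt_mul_of_pos_left hcap (exp_pos _)
end

section
/- Let a > 0 and r > 0. Suppose 0 < N₁ < N₂ and P₁, P₂ > 0 satisfy N₁ · log(1 + a·P₁/N₁) = r and N₂ · log(1 + a·P₂/N₂) = r. Then P₂ < P₁. -/
open Real

/-- `N ↦ N * log (1 + c / N)` is the perspective of the strictly concave `log (1 + ·)`. -/
theorem mul_log_one_add_div_lt_mul_log_one_add_div {c N₁ N₂ : ℝ} (hc₀ : c ≠ 0) (hc : -N₁ < c)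
    (hN₁ : 0 < N₁) (hN : N₁ < N₂) :
    N₁ * log (1 + c / N₁) < N₂ * log (1 + c / N₂) := by
  have hN₂ : 0 < N₂ := hN₁.trans hN
  set t := N₁ / N₂ with ht
  have ht₀ : 0 < t := div_pos hN₁ hN₂
  have ht₁ : t < 1 := (div_lt_one hN₂).2 hN
  have hmem : 1 + c / N₁ ∈ Set.Ioi (0 : ℝ) := by
    have : -1 < c / N₁ := by rwa [lt_div_iff₀ hN₁, neg_one_mul]
    simp only [Set.mem_Ioi]; linarith
  have hne : 1 + c / N₁ ≠ 1 := by simpa using div_ne_zero hc₀ hN₁.ne'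
  have hcomb : t * (1 + c / N₁) + (1 - t) * 1 = 1 + c / N₂ := by
    rw [ht]; field_simp; ring
  have hlt := strictConcaveOn_log_Ioi.2 hmem (Set.mem_Ioi.2 one_pos) hne ht₀ (sub_pos.2 ht₁)
    (by ring)
  simp only [smul_eq_mul, log_one, mul_zero, add_zero, hcomb] at hlt
  calc N₁ * log (1 + c / N₁) = N₂ * (t * log (1 + c / N₁)) := by rw [ht]; field_simp
    _ < N₂ * log (1 + c / N₂) := mul_lt_mul_of_pos_left hlt hN₂

theorem required_power_decreases_with_bandwidth_general (a r N₁ N₂ P₁ P₂ : ℝ)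
    (ha : 0 < a)
    (hN₁ : 0 < N₁) (hN : N₁ < N₂) (hP₁ : 0 < P₁)
    (h1 : N₁ * Real.log (1 + a * P₁ / N₁) = r)
    (h2 : N₂ * Real.log (1 + a * P₂ / N₂) = r) :
    P₂ < P₁ := by
  by_contra! hP
  have hc : 0 < a * P₁ := mul_pos ha hP₁
  have hrate_N : r < N₂ * log (1 + a * P₁ / N₂) :=
    h1 ▸ mul_log_one_add_div_lt_mul_log_one_add_div hc.ne' (by linarith) hN₁ hN
  have hrate_P : N₂ * log (1 + a * P₁ / N₂) ≤ N₂ * log (1 + a * P₂ / N₂) := by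
    have hN₂ : 0 < N₂ := hN₁.trans hN
    gcongr
  linarith

theorem required_power_decreases_with_bandwidth (a r N₁ N₂ P₁ P₂ : ℝ)
    (ha : 0 < a) (hr : 0 < r)
    (hN₁ : 0 < N₁) (hN : N₁ < N₂) (hP₁ : 0 < P₁) (hP₂ : 0 < P₂)
    (h1 : N₁ * Real.log (1 + a * P₁ / N₁) = r)
    (h2 : N₂ * Real.log (1 + a * P₂ / N₂) = r) :
    P₂ < P₁ :=
  required_power_decreases_with_bandwidth_general a r N₁ N₂ P₁ P₂ ha hN₁ hN hP₁ h1 h2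
end

section
/- Let b, E, ρ, T > 0, and set g̃ = (1/2) · (ρT/E + √((ρT/E)² + 4ρT/E)). Define η : ℝ → ℝ by η(g) = ((1 - e^{-g})·E + e^{-g}·ρ·T/g)/b. Then η is strictly decreasing on the interval (0, g̃] and strictly increasing on the interval [g̃, ∞). -/
/-!
Writing `k = ρT`, the numerator `(1 - e^{-g}) E + e^{-g} k / g` has derivative
`e^{-g} (E g² - k (g + 1)) / g²`. With `c = k / E` the sign of this is the sign of
`g² - c g - c = (g - g̃) (g + g̃ - c)`, where `g̃ = (c + √(c² + 4c)) / 2` is the positive root;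
the second factor is positive for `g > 0` because `g̃ ≥ c`. So the numerator falls on `(0, g̃]`
and rises on `[g̃, ∞)`, and dividing by `b > 0` preserves both.
-/

open Real Set

noncomputable section

/-- The positive root of `x² - c x - c`. -/
def quadraticPosRoot (c : ℝ) : ℝ := (1 / 2) * (c + √(c ^ 2 + 4 * c))

def energyNumerator (E k g : ℝ) : ℝ := (1 - exp (-g)) * E + exp (-g) * k / g

end

section QuadraticRoot

variable {c : ℝ}

theorem le_quadraticPosRoot (hc : 0 ≤ c) : c ≤ quadraticPosRoot c := by
  have : c ≤ √(c ^ 2 + 4 * c) := Real.le_sqrt_of_sq_le (by linarith)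
  unfold quadraticPosRoot
  linarith

theorem quadraticPosRoot_pos (hc : 0 < c) : 0 < quadraticPosRoot c :=
  hc.trans_le (le_quadraticPosRoot hc.le)

theorem sq_sub_mul_sub_eq_mul (hc : 0 ≤ c) (g : ℝ) :
    g ^ 2 - c * g - c = (g - quadraticPosRoot c) * (g + quadraticPosRoot c - c) := by
  have hs : √(c ^ 2 + 4 * c) ^ 2 = c ^ 2 + 4 * c := Real.sq_sqrt (by positivity)
  unfold quadraticPosRoot
  linear_combination (1 / 4 : ℝ) * hs

theorem sq_sub_mul_sub_neg (hc : 0 ≤ c) {g : ℝ} (hg : 0 < g) (hgr : g < quadraticPosRoot c) :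
    g ^ 2 - c * g - c < 0 := by
  rw [sq_sub_mul_sub_eq_mul hc]
  exact mul_neg_of_neg_of_pos (by linarith) (by linarith [le_quadraticPosRoot hc])

theorem sq_sub_mul_sub_pos (hc : 0 ≤ c) {g : ℝ} (hgr : quadraticPosRoot c < g) :
    0 < g ^ 2 - c * g - c := by
  have := le_quadraticPosRoot hc
  rw [sq_sub_mul_sub_eq_mul hc]
  exact mul_pos (by linarith) (by linarith)

end QuadraticRoot

section EnergyNumerator

variable {E k : ℝ}

theorem hasDerivAt_energyNumerator {g : ℝ} (hg : g ≠ 0) :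
    HasDerivAt (energyNumerator E k)
      (exp (-g) * (E * g ^ 2 - k * (g + 1)) / g ^ 2) g := by
  have he : HasDerivAt (fun g : ℝ => exp (-g)) (-exp (-g)) g := by
    simpa using (hasDerivAt_neg g).exp
  have h : HasDerivAt (energyNumerator E k)
      ((0 - -exp (-g)) * E + (-exp (-g) * k * g - exp (-g) * k * 1) / g ^ 2) g :=
    (((hasDerivAt_const g 1).sub he).mul_const E).add ((he.mul_const k).div (hasDerivAt_id' g) hg)
  convert h using 1
  field_simp
  ring

theorem continuousOn_energyNumerator {s : Set ℝ} (hs : s ⊆ Ioi 0) :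
    ContinuousOn (energyNumerator E k) s := fun _ hg =>
  (hasDerivAt_energyNumerator (hs hg).ne').continuousAt.continuousWithinAt

theorem mul_sq_sub_mul_add_one_eq (hE : E ≠ 0) (g : ℝ) :
    E * g ^ 2 - k * (g + 1) = E * (g ^ 2 - k / E * g - k / E) := by
  field_simp
  ring

variable (hE : 0 < E) (hk : 0 < k)
include hE hk

theorem strictAntiOn_energyNumerator :
    StrictAntiOn (energyNumerator E k) (Ioc 0 (quadraticPosRoot (k / E))) := by
  have hc : 0 ≤ k / E := by positivity
  refine strictAntiOn_of_hasDerivWithinAt_neg (convex_Ioc _ _)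
    (continuousOn_energyNumerator fun g hg => hg.1)
    (fun g hg => (hasDerivAt_energyNumerator (interior_subset hg).1.ne').hasDerivWithinAt)
    fun g hg => ?_
  rw [interior_Ioc] at hg
  rw [mul_sq_sub_mul_add_one_eq hE.ne']
  exact div_neg_of_neg_of_pos
    (mul_neg_of_pos_of_neg (exp_pos _) (mul_neg_of_pos_of_neg hE (sq_sub_mul_sub_neg hc hg.1 hg.2)))
    (pow_pos hg.1 2)

theorem strictMonoOn_energyNumerator :
    StrictMonoOn (energyNumerator E k) (Ici (quadraticPosRoot (k / E))) := by
  have hc : 0 < k / E := by positivity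
  have hpos : Ici (quadraticPosRoot (k / E)) ⊆ Ioi 0 := fun g hg =>
    (quadraticPosRoot_pos hc).trans_le hg
  refine strictMonoOn_of_hasDerivWithinAt_pos (convex_Ici _)
    (continuousOn_energyNumerator hpos)
    (fun g hg => (hasDerivAt_energyNumerator (hpos (interior_subset hg)).ne').hasDerivWithinAt)
    fun g hg => ?_
  have hg0 : 0 < g := hpos (interior_subset hg)
  rw [interior_Ici] at hg
  rw [mul_sq_sub_mul_add_one_eq hE.ne']
  exact div_pos (mul_pos (exp_pos _) (mul_pos hE (sq_sub_mul_sub_pos hc.le hg))) (pow_pos hg0 2)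

end EnergyNumerator

theorem urllc_energy_unimodal (b E ρ T : ℝ)
    (hb : 0 < b) (hE : 0 < E) (hρ : 0 < ρ) (hT : 0 < T) :
    StrictAntiOn (fun g : ℝ => ((1 - Real.exp (-g)) * E + Real.exp (-g) * ρ * T / g) / b)
      (Set.Ioc (0:ℝ) ((1/2) * (ρ * T / E + Real.sqrt ((ρ * T / E) ^ 2 + 4 * ρ * T / E)))) ∧
    StrictMonoOn (fun g : ℝ => ((1 - Real.exp (-g)) * E + Real.exp (-g) * ρ * T / g) / b)
      (Set.Ici ((1/2) * (ρ * T / E + Real.sqrt ((ρ * T / E) ^ 2 + 4 * ρ * T / E)))) := by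
  have hk : 0 < ρ * T := mul_pos hρ hT
  have hη : (fun g : ℝ => ((1 - Real.exp (-g)) * E + Real.exp (-g) * ρ * T / g) / b) =
      (· / b) ∘ energyNumerator E (ρ * T) := by
    ext g
    simp only [Function.comp, energyNumerator, mul_assoc]
  have hroot : (1/2) * (ρ * T / E + Real.sqrt ((ρ * T / E) ^ 2 + 4 * ρ * T / E)) =
      quadraticPosRoot (ρ * T / E) := by
    unfold quadraticPosRoot
    ring_nf
  rw [hη, hroot]
  exact ⟨(strictMono_div_right_of_pos hb).comp_strictAntiOn (strictAntiOn_energyNumerator hE hk),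
    (strictMono_div_right_of_pos hb).comp_strictMonoOn (strictMonoOn_energyNumerator hE hk)⟩
end

section
/- Let b, E, ρ, T > 0 and g_min > 0. Set g̃ = (1/2) · (ρT/E + √((ρT/E)² + 4ρT/E)) and define η : ℝ → ℝ by η(g) = ((1 - e^{-g})·E + e^{-g}·ρ·T/g)/b. Then for every g ≥ g_min, η(max(g_min, g̃)) ≤ η(g); that is, ĝ = max(g_min, g̃) minimizes η over [g_min, ∞). -/
/-!
On `g > 0` the derivative of `(1 - e^{-g}) E + e^{-g} c / g` is `e^{-g} / g² · (E g² - c g - c)`,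
whose sign is that of `g² - k g - k` with `k = c / E`. This quadratic has the single positive root
`g̃ = (k + √(k² + 4k)) / 2`, so the energy decreases on `(0, g̃]` and increases on `[g̃, ∞)`;
its minimum over `[g_min, ∞)` is therefore attained at `max g_min g̃`.
-/

open Real Set

lemma apply_max_le_of_antitoneOn_of_monotoneOn {α β : Type*} [LinearOrder α] [Preorder β] {f : α → β}
    {a r x : α} (hanti : AntitoneOn f (Icc a r)) (hmono : MonotoneOn f (Ici r)) (hx : a ≤ x) :
    f (max a r) ≤ f x := by
  rcases le_total r a with hra | har
  · rw [max_eq_left hra]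
    exact hmono hra (hra.trans hx) hx
  · rw [max_eq_right har]
    rcases le_total x r with hxr | hrx
    · exact hanti ⟨hx, hxr⟩ ⟨har, le_rfl⟩ hxr
    · exact hmono le_rfl hrx hrx

namespace Urllc

noncomputable def energy (E c g : ℝ) : ℝ := (1 - exp (-g)) * E + exp (-g) * c / g

noncomputable def threshold (k : ℝ) : ℝ := (1 / 2) * (k + √(k ^ 2 + 4 * k))

lemma hasDerivAt_energy (E c : ℝ) {x : ℝ} (hx : x ≠ 0) :
    HasDerivAt (energy E c) (exp (-x) / x ^ 2 * (E * x ^ 2 - c * x - c)) x := by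
  have hexp : HasDerivAt (fun g => exp (-g)) (-exp (-x)) x := by
    simpa using (hasDerivAt_neg x).exp
  have h : HasDerivAt (energy E c) _ x := (((hasDerivAt_const x 1).sub hexp).mul_const E).add
    ((hexp.mul_const c).div (hasDerivAt_id x) hx)
  convert h using 1
  field_simp
  ring

lemma continuousOn_energy (E c : ℝ) : ContinuousOn (energy E c) (Ioi 0) := fun _ hx =>
  (hasDerivAt_energy E c (ne_of_gt hx)).continuousAt.continuousWithinAt

lemma le_threshold {k : ℝ} (hk : 0 ≤ k) : k ≤ threshold k := by
  have : k ≤ √(k ^ 2 + 4 * k) := Real.le_sqrt_of_sq_le (by nlinarith)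
  unfold threshold
  linarith

lemma threshold_pos {k : ℝ} (hk : 0 < k) : 0 < threshold k :=
  hk.trans_le (le_threshold hk.le)

lemma sq_sub_mul_sub_eq {k : ℝ} (hk : 0 ≤ k) (x : ℝ) :
    x ^ 2 - k * x - k = (x - threshold k) * (x + threshold k - k) := by
  have hsq : √(k ^ 2 + 4 * k) ^ 2 = k ^ 2 + 4 * k := Real.sq_sqrt (by positivity)
  unfold threshold
  linear_combination (1 / 4 : ℝ) * hsq

lemma sq_sub_mul_sub_nonneg {k x : ℝ} (hk : 0 ≤ k) (hx : threshold k ≤ x) :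
    0 ≤ x ^ 2 - k * x - k := by
  have := le_threshold hk
  rw [sq_sub_mul_sub_eq hk]
  exact mul_nonneg (by linarith) (by linarith)

lemma sq_sub_mul_sub_nonpos {k x : ℝ} (hk : 0 ≤ k) (hx₀ : 0 ≤ x) (hx : x ≤ threshold k) :
    x ^ 2 - k * x - k ≤ 0 := by
  have := le_threshold hk
  rw [sq_sub_mul_sub_eq hk]
  exact mul_nonpos_of_nonpos_of_nonneg (by linarith) (by linarith)

lemma mul_sq_sub_mul_sub_eq_mul {E : ℝ} (hE : E ≠ 0) (c x : ℝ) :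
    E * x ^ 2 - c * x - c = E * (x ^ 2 - c / E * x - c / E) := by
  field_simp

lemma monotoneOn_energy {E c : ℝ} (hE : 0 < E) (hc : 0 < c) :
    MonotoneOn (energy E c) (Ici (threshold (c / E))) := by
  have hpos := threshold_pos (div_pos hc hE)
  refine monotoneOn_of_hasDerivWithinAt_nonneg (convex_Ici _)
    (f' := fun x => exp (-x) / x ^ 2 * (E * x ^ 2 - c * x - c))
    ((continuousOn_energy E c).mono fun x hx => hpos.trans_le hx) (fun x hx => ?_) fun x hx => ?_
  · rw [interior_Ici] at hx
    exact (hasDerivAt_energy E c (hpos.trans hx).ne').hasDerivWithinAt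
  · rw [interior_Ici] at hx
    rw [mul_sq_sub_mul_sub_eq_mul hE.ne']
    have := sq_sub_mul_sub_nonneg (div_pos hc hE).le hx.le
    positivity

lemma antitoneOn_energy {E c a : ℝ} (hE : 0 < E) (hc : 0 ≤ c) (ha : 0 < a) :
    AntitoneOn (energy E c) (Icc a (threshold (c / E))) := by
  refine antitoneOn_of_hasDerivWithinAt_nonpos (convex_Icc _ _)
    (f' := fun x => exp (-x) / x ^ 2 * (E * x ^ 2 - c * x - c))
    ((continuousOn_energy E c).mono fun x hx => ha.trans_le hx.1) (fun x hx => ?_) fun x hx => ?_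
  · rw [interior_Icc] at hx
    exact (hasDerivAt_energy E c (ha.trans hx.1).ne').hasDerivWithinAt
  · rw [interior_Icc] at hx
    rw [mul_sq_sub_mul_sub_eq_mul hE.ne']
    have := sq_sub_mul_sub_nonpos (div_nonneg hc hE.le) (ha.trans hx.1).le hx.2.le
    exact mul_nonpos_of_nonneg_of_nonpos (by positivity) (mul_nonpos_of_nonneg_of_nonpos hE.le this)

end Urllc

open Urllc in
theorem urllc_optimal_threshold (b E ρ T g_min : ℝ)
    (hb : 0 < b) (hE : 0 < E) (hρ : 0 < ρ) (hT : 0 < T) (hg : 0 < g_min) :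
    ∀ g : ℝ, g_min ≤ g →
      (fun g : ℝ => ((1 - Real.exp (-g)) * E + Real.exp (-g) * ρ * T / g) / b)
          (max g_min ((1/2) * (ρ * T / E + Real.sqrt ((ρ * T / E) ^ 2 + 4 * ρ * T / E)))) ≤
        (fun g : ℝ => ((1 - Real.exp (-g)) * E + Real.exp (-g) * ρ * T / g) / b) g := by
  intro g hgmin
  have henergy : ∀ x, (1 - exp (-x)) * E + exp (-x) * ρ * T / x = energy E (ρ * T) x :=
    fun x => by rw [energy, mul_assoc (exp (-x))]
  have hthreshold : (1 / 2) * (ρ * T / E + √((ρ * T / E) ^ 2 + 4 * ρ * T / E)) =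
      threshold (ρ * T / E) := by
    rw [threshold, mul_div_assoc (4 * ρ), mul_assoc 4 ρ, mul_div_assoc]
  simp only [henergy, hthreshold]
  have hc : 0 < ρ * T := mul_pos hρ hT
  exact div_le_div_of_nonneg_right (apply_max_le_of_antitoneOn_of_monotoneOn
    (antitoneOn_energy hE hc.le hg) (monotoneOn_energy hE hc) hgmin) hb.le
end
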